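/- Let η₁ ≠ η₂ be nonnegative reals, let ξ ∈ ℝ²₊ with ξ ≺ (η₁, η₂), with ξ₁ ≠ η₁ and ξ₂ ≠ η₁, and let u, u′ ∈ ℂ² be unit vectors. Then there exist unit vectors w, w′ ∈ ℂ² with w = σu + τu′ for scalars σ, τ such that ξ₁ w⊗w + ξ₂ w′⊗w′ = η₁ u⊗u + η₂ u′⊗u′, |σ|² + |τ|² ≤ 1, and |σ|² ≤ η₁(η₁−ξ₂)/(ξ₁(η₁−η₂)). -/

import Mathlib

open ContinuousLinearMap

/-- The rank-one operator `x ↦ ⟪v, x⟫ • v` on `ℂ²`. -/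
noncomputable def rankOneProj (v : EuclideanSpace ℂ (Fin 2)) :
    EuclideanSpace ℂ (Fin 2) →L[ℂ] EuclideanSpace ℂ (Fin 2) :=
  (innerSL ℂ v).smulRight v

/-!
In two dimensions majorization means `ξ = t • η + (1 - t) • (η₂, η₁)` for some `t ∈ [0, 1]`.
Take real amplitudes with `ξ₁ a² = t η₁`, `ξ₁ b² = (1 - t) η₂`, `ξ₂ a'² = (1 - t) η₁`,
`ξ₂ b'² = t η₂`: then `a² + b² = a'² + b'² = 1`, and `ξ₁ a b = ξ₂ a' b'` since both squares equal
`t (1 - t) η₁ η₂`. Rotating `u'` by a phase to `v` with `Re ⟪u, v⟫ = 0`, the vectors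
`w = a u + b v` and `w' = a' u - b' v` are unit vectors, the cross terms of
`ξ₁ w ⊗ w + ξ₂ w' ⊗ w'` cancel, and `|σ|² = a² = t η₁ / ξ₁` is the stated bound because
`η₁ - ξ₂ = t (η₁ - η₂)`.
-/

open Set

theorem exists_convex_comb_swap_of_majorizes {η₁ η₂ ξ₁ ξ₂ : ℝ}
    (hmax : max ξ₁ ξ₂ ≤ max η₁ η₂) (hsum : ξ₁ + ξ₂ = η₁ + η₂) :
    ∃ t ∈ Icc (0 : ℝ) 1, ξ₁ = t * η₁ + (1 - t) * η₂ ∧ ξ₂ = (1 - t) * η₁ + t * η₂ := by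
  have hξ₁ : ξ₁ ∈ segment ℝ η₂ η₁ := by
    rw [segment_eq_uIcc, mem_uIcc]
    rw [max_le_iff] at hmax
    rcases le_total η₁ η₂ with h | h
    · rw [max_eq_right h] at hmax; right; constructor <;> linarith
    · rw [max_eq_left h] at hmax; left; constructor <;> linarith
  obtain ⟨s, t, hs, ht, hst, rfl⟩ := hξ₁
  obtain rfl : s = 1 - t := by linarith
  simp only [smul_eq_mul] at hsum ⊢
  exact ⟨t, ⟨ht, by linarith⟩, by ring, by linarith⟩

theorem convex_comb_pos_of_ne {s x y : ℝ} (hs₀ : 0 < s) (hs₁ : s < 1) (hx : 0 ≤ x) (hy : 0 ≤ y)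
    (hxy : x ≠ y) : 0 < s * x + (1 - s) * y := by
  rcases hxy.lt_or_gt with h | h
  · nlinarith [mul_pos (sub_pos.2 hs₁) (hx.trans_lt h), mul_nonneg hs₀.le hx]
  · nlinarith [mul_pos hs₀ (hy.trans_lt h), mul_nonneg (sub_pos.2 hs₁).le hy]

namespace Complex

theorem exists_norm_eq_one_re_mul_eq_zero (c : ℂ) : ∃ φ : ℂ, ‖φ‖ = 1 ∧ (φ * c).re = 0 := by
  have h : exp (-(arg c : ℂ) * I) * c = ‖c‖ := by
    conv_lhs => arg 2; rw [← norm_mul_exp_arg_mul_I c]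
    rw [mul_left_comm, ← exp_add, neg_mul, neg_add_cancel, exp_zero, mul_one]
  refine ⟨I * exp (-(arg c : ℂ) * I), by simp [norm_exp], ?_⟩
  rw [mul_assoc, h]
  simp

end Complex

theorem norm_ofReal_smul_add_ofReal_smul_eq_one {𝕜 E : Type*} [RCLike 𝕜] [NormedAddCommGroup E]
    [InnerProductSpace 𝕜 E] {u v : E} (hu : ‖u‖ = 1) (hv : ‖v‖ = 1)
    (huv : RCLike.re (inner 𝕜 u v) = 0) {a b : ℝ} (hab : a ^ 2 + b ^ 2 = 1) :
    ‖(a : 𝕜) • u + (b : 𝕜) • v‖ = 1 := by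
  have h := norm_add_sq (𝕜 := 𝕜) ((a : 𝕜) • u) ((b : 𝕜) • v)
  rw [inner_smul_left, inner_smul_right, RCLike.conj_ofReal, ← mul_assoc, ← RCLike.ofReal_mul,
    RCLike.re_ofReal_mul, huv, norm_smul, norm_smul, hu, hv] at h
  simp only [RCLike.norm_ofReal, mul_one, mul_zero, add_zero, sq_abs] at h
  rw [hab] at h
  exact (pow_eq_one_iff_of_nonneg (norm_nonneg _) two_ne_zero).1 h

theorem rankOneProj_smul_of_norm_eq_one {φ : ℂ} (hφ : ‖φ‖ = 1) (v : EuclideanSpace ℂ (Fin 2)) :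
    rankOneProj (φ • v) = rankOneProj v := by
  ext1 x
  simp only [rankOneProj, smulRight_apply, innerSL_apply_apply, inner_smul_left, smul_smul]
  rw [mul_right_comm, Complex.conj_mul', hφ]
  simp

theorem smul_rankOneProj_add_smul_rankOneProj {ξ₁ ξ₂ a b a' b' : ℝ}
    (hcross : ξ₁ * a * b = ξ₂ * a' * b') (u v : EuclideanSpace ℂ (Fin 2)) :
    ξ₁ • rankOneProj ((a : ℂ) • u + (b : ℂ) • v) + ξ₂ • rankOneProj ((a' : ℂ) • u - (b' : ℂ) • v)
      = (ξ₁ * a ^ 2 + ξ₂ * a' ^ 2) • rankOneProj u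
        + (ξ₁ * b ^ 2 + ξ₂ * b' ^ 2) • rankOneProj v := by
  ext1 x
  simp only [rankOneProj, add_apply, smul_apply, smulRight_apply, innerSL_apply_apply,
    inner_add_left, inner_sub_left, inner_smul_left, Complex.conj_ofReal, ← Complex.coe_smul]
  have hc : (ξ₁ : ℂ) * a * b = ξ₂ * a' * b' := by exact_mod_cast hcross
  linear_combination (norm := module) (inner ℂ v x) • hc • u + (inner ℂ u x) • hc • v

theorem exists_unit_smul_rankOneProj_add_smul_rankOneProj {ξ₁ ξ₂ a b a' b' : ℝ}
    (hab : a ^ 2 + b ^ 2 = 1) (hab' : a' ^ 2 + b' ^ 2 = 1) (hcross : ξ₁ * a * b = ξ₂ * a' * b')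
    {u u' : EuclideanSpace ℂ (Fin 2)} (hu : ‖u‖ = 1) (hu' : ‖u'‖ = 1) :
    ∃ (w w' : EuclideanSpace ℂ (Fin 2)) (σ τ : ℂ),
      ‖w‖ = 1 ∧ ‖w'‖ = 1 ∧ w = σ • u + τ • u' ∧
      ξ₁ • rankOneProj w + ξ₂ • rankOneProj w'
        = (ξ₁ * a ^ 2 + ξ₂ * a' ^ 2) • rankOneProj u + (ξ₁ * b ^ 2 + ξ₂ * b' ^ 2) • rankOneProj u' ∧
      ‖σ‖ = |a| ∧ ‖τ‖ = |b| := by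
  obtain ⟨φ, hφ, hre⟩ := Complex.exists_norm_eq_one_re_mul_eq_zero (inner ℂ u u')
  have hv : ‖φ • u'‖ = 1 := by rw [norm_smul, hφ, hu', one_mul]
  have huv : RCLike.re (inner ℂ u (φ • u')) = 0 := by rwa [inner_smul_right]
  refine ⟨(a : ℂ) • u + (b : ℂ) • φ • u', (a' : ℂ) • u - (b' : ℂ) • φ • u', a, b * φ,
    norm_ofReal_smul_add_ofReal_smul_eq_one hu hv huv hab, ?_, by rw [smul_smul], ?_,
    by simp, by simp [hφ]⟩
  · have := norm_ofReal_smul_add_ofReal_smul_eq_one hu hv huv (a := a') (b := -b')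
      (by rwa [neg_sq])
    rwa [RCLike.ofReal_neg, neg_smul, ← sub_eq_add_neg] at this
  · rw [smul_rankOneProj_add_smul_rankOneProj hcross, rankOneProj_smul_of_norm_eq_one hφ]

theorem exists_unit_pairs_weighted_sum_eq_diag {t η₁ η₂ ξ₁ ξ₂ : ℝ} (ht : t ∈ Icc (0 : ℝ) 1)
    (hη₁ : 0 ≤ η₁) (hη₂ : 0 ≤ η₂) (hξ₁ : 0 < ξ₁) (hξ₂ : 0 < ξ₂) (h₁ : ξ₁ = t * η₁ + (1 - t) * η₂)
    (h₂ : ξ₂ = (1 - t) * η₁ + t * η₂) :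
    ∃ a b a' b' : ℝ, a ^ 2 + b ^ 2 = 1 ∧ a' ^ 2 + b' ^ 2 = 1 ∧ ξ₁ * a * b = ξ₂ * a' * b' ∧
      ξ₁ * a ^ 2 + ξ₂ * a' ^ 2 = η₁ ∧ ξ₁ * b ^ 2 + ξ₂ * b' ^ 2 = η₂ ∧ a ^ 2 = t * η₁ / ξ₁ := by
  obtain ⟨ht₀, ht₁⟩ := ht
  have hA : 0 ≤ t * η₁ := mul_nonneg ht₀ hη₁
  have hB : 0 ≤ (1 - t) * η₂ := mul_nonneg (by linarith) hη₂
  have hC : 0 ≤ (1 - t) * η₁ := mul_nonneg (by linarith) hη₁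
  have hD : 0 ≤ t * η₂ := mul_nonneg ht₀ hη₂
  have ha := Real.sq_sqrt (div_nonneg hA hξ₁.le)
  have hb := Real.sq_sqrt (div_nonneg hB hξ₁.le)
  have ha' := Real.sq_sqrt (div_nonneg hC hξ₂.le)
  have hb' := Real.sq_sqrt (div_nonneg hD hξ₂.le)
  refine ⟨√(t * η₁ / ξ₁), √((1 - t) * η₂ / ξ₁), √((1 - t) * η₁ / ξ₂), √(t * η₂ / ξ₂),
    ?_, ?_, ?_, ?_, ?_, ha⟩
  · rw [ha, hb]; field_simp; linarith
  · rw [ha', hb']; field_simp; linarith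
  · rw [← pow_left_inj₀ (by positivity) (by positivity) two_ne_zero, mul_pow, mul_pow, mul_pow,
      mul_pow, ha, hb, ha', hb']
    field_simp
  · rw [ha, ha']; field_simp; ring
  · rw [hb, hb']; field_simp; ring

theorem stmt13_general (η₁ η₂ ξ₁ ξ₂ : ℝ)
    (hη₁ : 0 ≤ η₁) (hη₂ : 0 ≤ η₂)
    (hne : η₁ ≠ η₂) (hξ₁η₁ : ξ₁ ≠ η₁) (hξ₂η₁ : ξ₂ ≠ η₁)
    (hmaj : max ξ₁ ξ₂ ≤ max η₁ η₂ ∧ ξ₁ + ξ₂ = η₁ + η₂)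
    (u u' : EuclideanSpace ℂ (Fin 2)) (hu : ‖u‖ = 1) (hu' : ‖u'‖ = 1) :
    ∃ (w w' : EuclideanSpace ℂ (Fin 2)) (σ τ : ℂ),
      ‖w‖ = 1 ∧ ‖w'‖ = 1 ∧ w = σ • u + τ • u' ∧
      ξ₁ • rankOneProj w + ξ₂ • rankOneProj w'
        = η₁ • rankOneProj u + η₂ • rankOneProj u' ∧
      ‖σ‖ ^ 2 + ‖τ‖ ^ 2 ≤ 1 ∧
      ‖σ‖ ^ 2 ≤ η₁ * (η₁ - ξ₂) / (ξ₁ * (η₁ - η₂)) := by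
  obtain ⟨t, ht, h₁, h₂⟩ := exists_convex_comb_swap_of_majorizes hmaj.1 hmaj.2
  have ht₀ : 0 < t := ht.1.lt_of_ne (by rintro rfl; exact hξ₂η₁ (by linarith))
  have ht₁ : t < 1 := ht.2.lt_of_ne (by rintro rfl; exact hξ₁η₁ (by linarith))
  have hξ₁pos : 0 < ξ₁ := h₁ ▸ convex_comb_pos_of_ne ht₀ ht₁ hη₁ hη₂ hne
  have hξ₂pos : 0 < ξ₂ := by linarith [convex_comb_pos_of_ne ht₀ ht₁ hη₂ hη₁ hne.symm]
  obtain ⟨a, b, a', b', hab, hab', hcross, hη₁', hη₂', ha⟩ :=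
    exists_unit_pairs_weighted_sum_eq_diag ht hη₁ hη₂ hξ₁pos hξ₂pos h₁ h₂
  obtain ⟨w, w', σ, τ, hw, hw', hwσ, hdecomp, hσ, hτ⟩ :=
    exists_unit_smul_rankOneProj_add_smul_rankOneProj hab hab' hcross hu hu'
  refine ⟨w, w', σ, τ, hw, hw', hwσ, by rwa [hη₁', hη₂'] at hdecomp, ?_, ?_⟩
  · rw [hσ, hτ, sq_abs, sq_abs, hab]
  · have hgap : η₁ - ξ₂ = t * (η₁ - η₂) := by rw [h₂]; ring
    rw [hσ, sq_abs, ha, hgap, ← mul_assoc, mul_comm η₁ t,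
      mul_div_mul_right _ _ (sub_ne_zero.2 hne)]

theorem stmt13 (η₁ η₂ ξ₁ ξ₂ : ℝ)
    (hη₁ : 0 ≤ η₁) (hη₂ : 0 ≤ η₂) (hξ₁ : 0 ≤ ξ₁) (hξ₂ : 0 ≤ ξ₂)
    (hne : η₁ ≠ η₂) (hξ₁η₁ : ξ₁ ≠ η₁) (hξ₂η₁ : ξ₂ ≠ η₁)
    (hmaj : max ξ₁ ξ₂ ≤ max η₁ η₂ ∧ ξ₁ + ξ₂ = η₁ + η₂)
    (u u' : EuclideanSpace ℂ (Fin 2)) (hu : ‖u‖ = 1) (hu' : ‖u'‖ = 1) :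
    ∃ (w w' : EuclideanSpace ℂ (Fin 2)) (σ τ : ℂ),
      ‖w‖ = 1 ∧ ‖w'‖ = 1 ∧ w = σ • u + τ • u' ∧
      ξ₁ • rankOneProj w + ξ₂ • rankOneProj w'
        = η₁ • rankOneProj u + η₂ • rankOneProj u' ∧
      ‖σ‖ ^ 2 + ‖τ‖ ^ 2 ≤ 1 ∧
      ‖σ‖ ^ 2 ≤ η₁ * (η₁ - ξ₂) / (ξ₁ * (η₁ - η₂)) :=
  stmt13_general η₁ η₂ ξ₁ ξ₂ hη₁ hη₂ hne hξ₁η₁ hξ₂η₁ hmaj u u' hu hu'
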